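/- Let P, Q be Borel probability measures on ℝ with finite second moments. Then the squared 2-Wasserstein distance between P and Q equals ∫₀¹ (F_P←(x) − F_Q←(x))² dx, where F_P← and F_Q← are the left generalized inverses of the cdfs; moreover replacing either generalized inverse by its right-continuous version does not change the value of the integral. -/

import Mathlib

/-!
Evaluating both quantile functions at one uniform variable on `(0, 1)` gives a coupling of `P`
and `Q` (the comonotone one) whose quadratic cost is the integral on the right. Among couplings
with fixed marginals, `∫ (x - y)² dπ` varies only through the mixed moment `∫ x y dπ`. Writing
`x = ∫ (𝟙{s < x} - 𝟙{s < 0}) ds` and applying Fubini (Hoeffding's identity), this moment is an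
integral over `(s, t)` of `π(X > s, Y > t)` plus terms depending only on the marginals, and the
comonotone coupling maximises every such quadrant probability, as
`π(X > s, Y > t) ≤ min (P(X > s)) (Q(Y > t))` with equality for it. Hence it is optimal.

The left and right inverses of a cdf `F` differ at `u` only if `F` is flat at level `u`. Since the
left inverse is monotone and jumps over each such flat piece `(leftInv F u, rightInv F u)`, these
are disjoint open intervals, so this happens for only countably many `u`.
-/

open MeasureTheory Set Filter Topology ProbabilityTheory

/-- cdf of a Borel measure on ℝ. -/
noncomputable def mcdf (P : Measure ℝ) (t : ℝ) : ℝ := (P (Set.Iic t)).toReal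

/-- Left generalized inverse (generalized quantile function). -/
noncomputable def leftInv (F : ℝ → ℝ) (a : ℝ) : ℝ := sInf {t : ℝ | a ≤ F t}

/-- Right generalized inverse. -/
noncomputable def rightInv (F : ℝ → ℝ) (a : ℝ) : ℝ := sInf {t : ℝ | a < F t}

/-- Squared 2-Wasserstein distance, as the infimum of quadratic transport costs over
couplings of P and Q. -/
noncomputable def W2sq (P Q : Measure ℝ) : ℝ :=
  sInf {c : ℝ | ∃ π : Measure (ℝ × ℝ), IsProbabilityMeasure π ∧
    π.map Prod.fst = P ∧ π.map Prod.snd = Q ∧ c = ∫ p, (p.1 - p.2) ^ 2 ∂π}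

section GeneralizedInverse

variable {F : ℝ → ℝ}

lemma bddBelow_setOf_le_apply (hF : Monotone F) (hF0 : Tendsto F atBot (𝓝 0)) {u : ℝ}
    (hu : 0 < u) : BddBelow {t | u ≤ F t} := by
  obtain ⟨t₀, ht₀⟩ := (hF0.eventually_lt_const hu).exists
  exact ⟨t₀, fun t ht => le_of_not_gt fun htt₀ => (ht.trans (hF htt₀.le)).not_gt ht₀⟩

lemma nonempty_setOf_lt_apply (hF1 : Tendsto F atTop (𝓝 1)) {u : ℝ} (hu : u < 1) :
    {t | u < F t}.Nonempty :=
  (hF1.eventually_const_lt hu).exists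

lemma nonempty_setOf_le_apply (hF1 : Tendsto F atTop (𝓝 1)) {u : ℝ} (hu : u < 1) :
    {t | u ≤ F t}.Nonempty :=
  (nonempty_setOf_lt_apply hF1 hu).mono (ofPred_subset_ofPred.2 fun _ => le_of_lt)

lemma leftInv_le_leftInv (hF : Monotone F) (hF0 : Tendsto F atBot (𝓝 0))
    (hF1 : Tendsto F atTop (𝓝 1)) {u v : ℝ} (hu : 0 < u) (huv : u ≤ v) (hv : v < 1) :
    leftInv F u ≤ leftInv F v :=
  csInf_le_csInf (bddBelow_setOf_le_apply hF hF0 hu) (nonempty_setOf_le_apply hF1 hv)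
    fun _ ht => huv.trans ht

lemma leftInv_le_rightInv (hF : Monotone F) (hF0 : Tendsto F atBot (𝓝 0))
    (hF1 : Tendsto F atTop (𝓝 1)) {u : ℝ} (hu : u ∈ Ioo 0 1) :
    leftInv F u ≤ rightInv F u :=
  csInf_le_csInf (bddBelow_setOf_le_apply hF hF0 hu.1) (nonempty_setOf_lt_apply hF1 hu.2)
    (ofPred_subset_ofPred.2 fun _ => le_of_lt)

lemma rightInv_le_leftInv (hF : Monotone F) (hF0 : Tendsto F atBot (𝓝 0))
    (hF1 : Tendsto F atTop (𝓝 1)) {u v : ℝ} (hu : 0 < u) (huv : u < v) (hv : v < 1) :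
    rightInv F u ≤ leftInv F v :=
  csInf_le_csInf ((bddBelow_setOf_le_apply hF hF0 hu).mono
    (ofPred_subset_ofPred.2 fun _ => le_of_lt)) (nonempty_setOf_le_apply hF1 hv)
    fun _ ht => huv.trans_le ht

lemma leftInv_ae_eq_rightInv (hF : Monotone F) (hF0 : Tendsto F atBot (𝓝 0))
    (hF1 : Tendsto F atTop (𝓝 1)) :
    leftInv F =ᵐ[volume.restrict (Ioo 0 1)] rightInv F := by
  have hgaps := countable_image_lt_image_Ioi_within (Ioo (0 : ℝ) 1) (leftInv F)
  rw [EventuallyEq, ae_restrict_iff' measurableSet_Ioo]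
  filter_upwards [hgaps.ae_notMem volume] with u hu hmem
  refine (leftInv_le_rightInv hF hF0 hF1 hmem).antisymm (not_lt.1 fun hlt => hu ?_)
  exact ⟨hmem, rightInv F u, hlt, fun v hv huv => rightInv_le_leftInv hF hF0 hF1 hmem.1 huv hv.2⟩

lemma aemeasurable_leftInv (hF : Monotone F) (hF0 : Tendsto F atBot (𝓝 0))
    (hF1 : Tendsto F atTop (𝓝 1)) : AEMeasurable (leftInv F) (volume.restrict (Ioo 0 1)) :=
  aemeasurable_restrict_of_monotoneOn measurableSet_Ioo
    fun _ hu _ hv huv => leftInv_le_leftInv hF hF0 hF1 hu.1 huv hv.2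

end GeneralizedInverse

instance : IsProbabilityMeasure (volume.restrict (Ioo (0 : ℝ) 1)) := ⟨by simp⟩

namespace StieltjesFunction

variable (F : StieltjesFunction ℝ)

lemma le_apply_leftInv (hF0 : Tendsto F atBot (𝓝 0)) (hF1 : Tendsto F atTop (𝓝 1)) {u : ℝ}
    (hu : u ∈ Ioo 0 1) : u ≤ F (leftInv F u) := by
  have hbdd := bddBelow_setOf_le_apply F.mono hF0 hu.1
  have hne := nonempty_setOf_le_apply hF1 hu.2
  refine ge_of_tendsto ((F.right_continuous _).mono Ioi_subset_Ici_self) ?_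
  filter_upwards [self_mem_nhdsWithin] with t ht
  obtain ⟨s, hs, hst⟩ := (csInf_lt_iff hbdd hne).1 ht
  exact hs.trans (F.mono hst.le)

lemma leftInv_le_iff (hF0 : Tendsto F atBot (𝓝 0)) (hF1 : Tendsto F atTop (𝓝 1)) {u t : ℝ}
    (hu : u ∈ Ioo 0 1) : leftInv F u ≤ t ↔ u ≤ F t :=
  ⟨fun h => (F.le_apply_leftInv hF0 hF1 hu).trans (F.mono h),
    fun h => csInf_le (bddBelow_setOf_le_apply F.mono hF0 hu.1) h⟩

lemma lt_leftInv_iff (hF0 : Tendsto F atBot (𝓝 0)) (hF1 : Tendsto F atTop (𝓝 1)) {u t : ℝ}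
    (hu : u ∈ Ioo 0 1) : t < leftInv F u ↔ F t < u := by
  simpa only [not_le] using (F.leftInv_le_iff hF0 hF1 hu).not

lemma map_leftInv (hF0 : Tendsto F atBot (𝓝 0)) (hF1 : Tendsto F atTop (𝓝 1)) :
    (volume.restrict (Ioo 0 1)).map (leftInv F) = F.measure := by
  refine Measure.ext_of_Iic _ _ fun t => ?_
  have hpre : leftInv F ⁻¹' Iic t ∩ Ioo 0 1 = Ioo 0 1 ∩ Iic (F t) := by
    ext u
    simp only [mem_inter_iff, mem_preimage, mem_Iic]
    exact ⟨fun h => ⟨h.2, (F.leftInv_le_iff hF0 hF1 h.2).1 h.1⟩,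
      fun h => ⟨(F.leftInv_le_iff hF0 hF1 h.1).2 h.2, h.1⟩⟩
  have hFt : F t ≤ 1 := F.mono.ge_of_tendsto hF1 t
  rw [Measure.map_apply_of_aemeasurable (aemeasurable_leftInv F.mono hF0 hF1) measurableSet_Iic,
    Measure.restrict_apply' measurableSet_Ioo, hpre, F.measure_Iic hF0, sub_zero,
    measure_congr ((Ioo_ae_eq_Ioc (μ := volume)).inter (ae_eq_refl (Iic (F t)))),
    Ioc_inter_Iic, Real.volume_Ioc, min_eq_right hFt, sub_zero]

end StieltjesFunction

section Hoeffding

noncomputable def orientedIndicator (x s : ℝ) : ℝ :=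
  (if s < x then 1 else 0) - if s < 0 then 1 else 0

lemma orientedIndicator_eq (x : ℝ) :
    orientedIndicator x = (Ico 0 x).indicator 1 - (Ico x 0).indicator 1 := by
  ext s
  simp only [orientedIndicator, Pi.sub_apply, indicator_apply, mem_Ico, Pi.one_apply]
  split_ifs <;> grind

lemma integrable_indicator_one_Ico (a b : ℝ) : Integrable ((Ico a b).indicator (1 : ℝ → ℝ)) :=
  IntegrableOn.integrable_indicator (integrableOn_const measure_Ico_lt_top.ne) measurableSet_Ico

lemma abs_orientedIndicator (x : ℝ) :
    (fun s => |orientedIndicator x s|) = (Ico 0 x).indicator 1 + (Ico x 0).indicator 1 := by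
  ext s
  simp only [orientedIndicator, Pi.add_apply, indicator_apply, mem_Ico, Pi.one_apply]
  split_ifs <;> grind

lemma measurable_orientedIndicator : Measurable (Function.uncurry orientedIndicator) := by
  refine Measurable.sub ?_ ?_ <;> refine Measurable.ite ?_ measurable_const measurable_const
  exacts [measurableSet_lt measurable_snd measurable_fst,
    measurableSet_lt measurable_snd measurable_const]

lemma integrable_orientedIndicator (x : ℝ) : Integrable (orientedIndicator x) := by
  rw [orientedIndicator_eq]
  exact (integrable_indicator_one_Ico _ _).sub (integrable_indicator_one_Ico _ _)

lemma integral_orientedIndicator (x : ℝ) : ∫ s, orientedIndicator x s = x := by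
  rw [orientedIndicator_eq, integral_sub' (integrable_indicator_one_Ico _ _)
    (integrable_indicator_one_Ico _ _)]
  simp

lemma integral_abs_orientedIndicator (x : ℝ) : ∫ s, |orientedIndicator x s| = |x| := by
  rw [abs_orientedIndicator, integral_add' (integrable_indicator_one_Ico _ _)
    (integrable_indicator_one_Ico _ _)]
  simp

variable {π : Measure (ℝ × ℝ)}

lemma integrable_orientedIndicator_mul_orientedIndicator [SFinite π]
    (hπ : Integrable (fun p : ℝ × ℝ => p.1 * p.2) π) :
    Integrable (fun q : (ℝ × ℝ) × (ℝ × ℝ) =>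
      orientedIndicator q.1.1 q.2.1 * orientedIndicator q.1.2 q.2.2)
      (π.prod (volume.prod volume)) := by
  have hmeas : Measurable (fun q : (ℝ × ℝ) × (ℝ × ℝ) =>
      orientedIndicator q.1.1 q.2.1 * orientedIndicator q.1.2 q.2.2) :=
    (measurable_orientedIndicator.comp (measurable_fst.fst.prodMk measurable_snd.fst)).mul
      (measurable_orientedIndicator.comp (measurable_fst.snd.prodMk measurable_snd.snd))
  refine (integrable_prod_iff hmeas.aestronglyMeasurable).2
    ⟨ae_of_all _ fun p => (integrable_orientedIndicator p.1).mul_prod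
      (integrable_orientedIndicator p.2), ?_⟩
  convert hπ.abs using 2 with p
  simp_rw [norm_mul, Real.norm_eq_abs]
  rw [integral_prod_mul (fun s => |orientedIndicator p.1 s|)
    (fun t => |orientedIndicator p.2 t|), integral_abs_orientedIndicator,
    integral_abs_orientedIndicator, abs_mul]

lemma integral_fst_mul_snd_eq_integral_orientedIndicator [SFinite π]
    (hπ : Integrable (fun p : ℝ × ℝ => p.1 * p.2) π) :
    ∫ p, p.1 * p.2 ∂π = ∫ z : ℝ × ℝ, ∫ p,
      orientedIndicator p.1 z.1 * orientedIndicator p.2 z.2 ∂π ∂(volume.prod volume) := by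
  rw [← integral_integral_swap (integrable_orientedIndicator_mul_orientedIndicator hπ)]
  congr 1 with p
  rw [integral_prod_mul (orientedIndicator p.1) (orientedIndicator p.2),
    integral_orientedIndicator, integral_orientedIndicator]

lemma integral_orientedIndicator_mul_orientedIndicator [IsFiniteMeasure π] (s t : ℝ) :
    ∫ p, orientedIndicator p.1 s * orientedIndicator p.2 t ∂π =
      π.real (Ioi s ×ˢ Ioi t) - (if t < 0 then 1 else 0) * π.real (Prod.fst ⁻¹' Ioi s)
        - (if s < 0 then 1 else 0) * π.real (Prod.snd ⁻¹' Ioi t)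
        + (if s < 0 then 1 else 0) * (if t < 0 then 1 else 0) * π.real univ := by
  set a : ℝ := if s < 0 then 1 else 0
  set b : ℝ := if t < 0 then 1 else 0
  have hU : MeasurableSet (Ioi s ×ˢ Ioi t) := measurableSet_Ioi.prod measurableSet_Ioi
  have hS : MeasurableSet (Prod.fst ⁻¹' Ioi s : Set (ℝ × ℝ)) := measurable_fst measurableSet_Ioi
  have hT : MeasurableSet (Prod.snd ⁻¹' Ioi t : Set (ℝ × ℝ)) := measurable_snd measurableSet_Ioi
  have hint {A : Set (ℝ × ℝ)} (hA : MeasurableSet A) : Integrable (A.indicator 1) π :=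
    (integrable_const (1 : ℝ)).indicator hA
  have hpt : (fun p : ℝ × ℝ => orientedIndicator p.1 s * orientedIndicator p.2 t) =
      (Ioi s ×ˢ Ioi t).indicator 1 - b • (Prod.fst ⁻¹' Ioi s).indicator 1
        - a • (Prod.snd ⁻¹' Ioi t).indicator 1 + fun _ => a * b := by
    ext p
    simp only [orientedIndicator, a, b, Pi.add_apply, Pi.sub_apply, Pi.smul_apply, smul_eq_mul,
      indicator_apply, mem_prod, mem_Ioi, Pi.one_apply]
    split_ifs <;> simp_all
  rw [hpt, integral_add' (((hint hU).sub ((hint hS).smul b)).sub ((hint hT).smul a))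
      (integrable_const _), integral_sub' ((hint hU).sub ((hint hS).smul b)) ((hint hT).smul a),
    integral_sub' (hint hU) ((hint hS).smul b)]
  simp only [Pi.smul_apply, smul_eq_mul, integral_const_mul, integral_const,
    integral_indicator_one hU, integral_indicator_one hS, integral_indicator_one hT]
  ring

lemma integral_fst_mul_snd_le_of_measure_Ioi_prod_Ioi_le {π' : Measure (ℝ × ℝ)}
    [IsFiniteMeasure π] [IsFiniteMeasure π']
    (hfst : π.map Prod.fst = π'.map Prod.fst) (hsnd : π.map Prod.snd = π'.map Prod.snd)
    (hπ : Integrable (fun p : ℝ × ℝ => p.1 * p.2) π)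
    (hπ' : Integrable (fun p : ℝ × ℝ => p.1 * p.2) π')
    (hle : ∀ s t, π (Ioi s ×ˢ Ioi t) ≤ π' (Ioi s ×ˢ Ioi t)) :
    ∫ p, p.1 * p.2 ∂π ≤ ∫ p, p.1 * p.2 ∂π' := by
  have hmarg {f : ℝ × ℝ → ℝ} (hf : Measurable f) (hff : π.map f = π'.map f) {A : Set ℝ}
      (hA : MeasurableSet A) : π.real (f ⁻¹' A) = π'.real (f ⁻¹' A) := by
    rw [← map_measureReal_apply hf hA, hff, map_measureReal_apply hf hA]
  rw [integral_fst_mul_snd_eq_integral_orientedIndicator hπ,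
    integral_fst_mul_snd_eq_integral_orientedIndicator hπ']
  refine integral_mono
    (integrable_orientedIndicator_mul_orientedIndicator hπ).integral_prod_right
    (integrable_orientedIndicator_mul_orientedIndicator hπ').integral_prod_right fun z => ?_
  simp only [integral_orientedIndicator_mul_orientedIndicator,
    hmarg measurable_fst hfst measurableSet_Ioi, hmarg measurable_snd hsnd measurableSet_Ioi,
    ← preimage_univ (f := Prod.fst), hmarg measurable_fst hfst MeasurableSet.univ]
  gcongr
  exact ENNReal.toReal_mono (measure_ne_top π' _) (hle z.1 z.2)

end Hoeffding

section Coupling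

variable {π : Measure (ℝ × ℝ)}

lemma integrable_fst_sq_of_map (h₁ : Integrable (fun x : ℝ => x ^ 2) (π.map Prod.fst)) :
    Integrable (fun p : ℝ × ℝ => p.1 ^ 2) π :=
  (integrable_map_measure (by fun_prop) measurable_fst.aemeasurable).1 h₁

lemma integrable_snd_sq_of_map (h₂ : Integrable (fun x : ℝ => x ^ 2) (π.map Prod.snd)) :
    Integrable (fun p : ℝ × ℝ => p.2 ^ 2) π :=
  (integrable_map_measure (by fun_prop) measurable_snd.aemeasurable).1 h₂

lemma integrable_fst_mul_snd_of_map (h₁ : Integrable (fun x : ℝ => x ^ 2) (π.map Prod.fst))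
    (h₂ : Integrable (fun x : ℝ => x ^ 2) (π.map Prod.snd)) :
    Integrable (fun p : ℝ × ℝ => p.1 * p.2) π := by
  refine ((integrable_fst_sq_of_map h₁).add (integrable_snd_sq_of_map h₂)).mono' (by fun_prop)
    (ae_of_all _ fun p => ?_)
  rw [Real.norm_eq_abs, abs_mul, Pi.add_apply, ← sq_abs p.1, ← sq_abs p.2]
  nlinarith [two_mul_le_add_sq |p.1| |p.2|, abs_nonneg p.1, abs_nonneg p.2]

lemma integral_sub_sq_eq (h₁ : Integrable (fun x : ℝ => x ^ 2) (π.map Prod.fst))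
    (h₂ : Integrable (fun x : ℝ => x ^ 2) (π.map Prod.snd)) :
    ∫ p, (p.1 - p.2) ^ 2 ∂π = ∫ x, x ^ 2 ∂(π.map Prod.fst) + ∫ x, x ^ 2 ∂(π.map Prod.snd)
      - 2 * ∫ p, p.1 * p.2 ∂π := by
  have hfst := integrable_fst_sq_of_map h₁
  have hsnd := integrable_snd_sq_of_map h₂
  have hsq : Integrable (fun p : ℝ × ℝ => p.1 ^ 2 + p.2 ^ 2) π := hfst.add hsnd
  have hmul := (integrable_fst_mul_snd_of_map h₁ h₂).const_mul 2
  rw [integral_map measurable_fst.aemeasurable (by fun_prop),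
    integral_map measurable_snd.aemeasurable (by fun_prop), ← integral_add hfst hsnd,
    ← integral_const_mul, ← integral_sub hsq hmul]
  congr 1 with p
  ring

end Coupling

noncomputable def quantileCoupling (P Q : Measure ℝ) : Measure (ℝ × ℝ) :=
  (volume.restrict (Ioo 0 1)).map fun u => (leftInv (cdf P) u, leftInv (cdf Q) u)

section QuantileCoupling

variable {P Q : Measure ℝ}

lemma measure_Ioi_eq_ofReal_one_sub_cdf [IsProbabilityMeasure P] (s : ℝ) :
    P (Ioi s) = ENNReal.ofReal (1 - cdf P s) := by
  rw [← (cdf P).measure_Ioi (tendsto_cdf_atTop P), measure_cdf]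

lemma aemeasurable_leftInv_cdf_prodMk :
    AEMeasurable (fun u => (leftInv (cdf P) u, leftInv (cdf Q) u)) (volume.restrict (Ioo 0 1)) :=
  (aemeasurable_leftInv (cdf P).mono (tendsto_cdf_atBot P) (tendsto_cdf_atTop P)).prodMk
    (aemeasurable_leftInv (cdf Q).mono (tendsto_cdf_atBot Q) (tendsto_cdf_atTop Q))

instance : IsProbabilityMeasure (quantileCoupling P Q) :=
  Measure.isProbabilityMeasure_map aemeasurable_leftInv_cdf_prodMk

lemma map_fst_quantileCoupling [IsProbabilityMeasure P] :
    (quantileCoupling P Q).map Prod.fst = P := by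
  rw [quantileCoupling, AEMeasurable.map_map_of_aemeasurable measurable_fst.aemeasurable
    aemeasurable_leftInv_cdf_prodMk]
  exact ((cdf P).map_leftInv (tendsto_cdf_atBot P) (tendsto_cdf_atTop P)).trans (measure_cdf P)

lemma map_snd_quantileCoupling [IsProbabilityMeasure Q] :
    (quantileCoupling P Q).map Prod.snd = Q := by
  rw [quantileCoupling, AEMeasurable.map_map_of_aemeasurable measurable_snd.aemeasurable
    aemeasurable_leftInv_cdf_prodMk]
  exact ((cdf Q).map_leftInv (tendsto_cdf_atBot Q) (tendsto_cdf_atTop Q)).trans (measure_cdf Q)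

lemma quantileCoupling_Ioi_prod_Ioi [IsProbabilityMeasure P] [IsProbabilityMeasure Q]
    (s t : ℝ) : quantileCoupling P Q (Ioi s ×ˢ Ioi t) = min (P (Ioi s)) (Q (Ioi t)) := by
  have hP {u t : ℝ} (hu : u ∈ Ioo 0 1) : t < leftInv (cdf P) u ↔ cdf P t < u :=
    (cdf P).lt_leftInv_iff (tendsto_cdf_atBot P) (tendsto_cdf_atTop P) hu
  have hQ {u t : ℝ} (hu : u ∈ Ioo 0 1) : t < leftInv (cdf Q) u ↔ cdf Q t < u :=
    (cdf Q).lt_leftInv_iff (tendsto_cdf_atBot Q) (tendsto_cdf_atTop Q) hu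
  have hpre : (fun u => (leftInv (cdf P) u, leftInv (cdf Q) u)) ⁻¹' (Ioi s ×ˢ Ioi t) ∩ Ioo 0 1 =
      Ioo (max (cdf P s) (cdf Q t)) 1 := by
    ext u
    simp only [mem_inter_iff, mem_preimage, mem_prod, mem_Ioi, mem_Ioo, max_lt_iff]
    constructor
    · rintro ⟨⟨hs, ht⟩, hu⟩
      exact ⟨⟨(hP hu).1 hs, (hQ hu).1 ht⟩, hu.2⟩
    · rintro ⟨⟨hs, ht⟩, hu⟩
      have hu : u ∈ Ioo 0 1 := ⟨(cdf_nonneg P s).trans_lt hs, hu⟩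
      exact ⟨⟨(hP hu).2 hs, (hQ hu).2 ht⟩, hu⟩
  rw [quantileCoupling, Measure.map_apply_of_aemeasurable aemeasurable_leftInv_cdf_prodMk
      (measurableSet_Ioi.prod measurableSet_Ioi), Measure.restrict_apply' measurableSet_Ioo,
    hpre, Real.volume_Ioo, measure_Ioi_eq_ofReal_one_sub_cdf, measure_Ioi_eq_ofReal_one_sub_cdf,
    ← ENNReal.ofReal_min, min_sub_sub_left]

lemma integral_sub_sq_quantileCoupling :
    ∫ p, (p.1 - p.2) ^ 2 ∂(quantileCoupling P Q) =
      ∫ u in Ioo 0 1, (leftInv (cdf P) u - leftInv (cdf Q) u) ^ 2 :=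
  integral_map aemeasurable_leftInv_cdf_prodMk (by fun_prop)

lemma integral_sub_sq_quantileCoupling_le [IsProbabilityMeasure P] [IsProbabilityMeasure Q]
    (hP2 : Integrable (fun x : ℝ => x ^ 2) P) (hQ2 : Integrable (fun x : ℝ => x ^ 2) Q)
    {π : Measure (ℝ × ℝ)} [IsFiniteMeasure π] (hπ₁ : π.map Prod.fst = P)
    (hπ₂ : π.map Prod.snd = Q) :
    ∫ p, (p.1 - p.2) ^ 2 ∂(quantileCoupling P Q) ≤ ∫ p, (p.1 - p.2) ^ 2 ∂π := by
  have hq₁ : (quantileCoupling P Q).map Prod.fst = P := map_fst_quantileCoupling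
  have hq₂ : (quantileCoupling P Q).map Prod.snd = Q := map_snd_quantileCoupling
  have hmixed : ∫ p, p.1 * p.2 ∂π ≤ ∫ p, p.1 * p.2 ∂(quantileCoupling P Q) := by
    refine integral_fst_mul_snd_le_of_measure_Ioi_prod_Ioi_le (hπ₁.trans hq₁.symm)
      (hπ₂.trans hq₂.symm) (integrable_fst_mul_snd_of_map (hπ₁ ▸ hP2) (hπ₂ ▸ hQ2))
      (integrable_fst_mul_snd_of_map (by rwa [hq₁]) (by rwa [hq₂])) fun s t => ?_
    rw [quantileCoupling_Ioi_prod_Ioi, ← hπ₁, ← hπ₂,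
      Measure.map_apply measurable_fst measurableSet_Ioi,
      Measure.map_apply measurable_snd measurableSet_Ioi]
    exact le_min (measure_mono fun p hp => hp.1) (measure_mono fun p hp => hp.2)
  rw [integral_sub_sq_eq (by rwa [hq₁]) (by rwa [hq₂]), integral_sub_sq_eq (hπ₁ ▸ hP2) (hπ₂ ▸ hQ2),
    hq₁, hq₂, hπ₁, hπ₂]
  linarith

lemma W2sq_eq_integral_sq_sub_leftInv_cdf [IsProbabilityMeasure P] [IsProbabilityMeasure Q]
    (hP2 : Integrable (fun x : ℝ => x ^ 2) P) (hQ2 : Integrable (fun x : ℝ => x ^ 2) Q) :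
    W2sq P Q = ∫ u in Ioo 0 1, (leftInv (cdf P) u - leftInv (cdf Q) u) ^ 2 := by
  rw [← integral_sub_sq_quantileCoupling]
  refine IsLeast.csInf_eq ⟨⟨quantileCoupling P Q, inferInstance, map_fst_quantileCoupling,
    map_snd_quantileCoupling, rfl⟩, ?_⟩
  rintro c ⟨π, _, hπ₁, hπ₂, rfl⟩
  exact integral_sub_sq_quantileCoupling_le hP2 hQ2 hπ₁ hπ₂

end QuantileCoupling

lemma mcdf_eq_cdf (P : Measure ℝ) [IsProbabilityMeasure P] : mcdf P = cdf P := by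
  ext t
  rw [mcdf, cdf_eq_real, measureReal_def]

/-- On the real line W₂² equals the squared L² distance between quantile functions;
moreover replacing either generalized inverse by its right-continuous version does not
change the value of the integral. -/
theorem W2sq_eq_quantile_integral (P Q : Measure ℝ)
    [IsProbabilityMeasure P] [IsProbabilityMeasure Q]
    (hP2 : Integrable (fun x : ℝ => x ^ 2) P) (hQ2 : Integrable (fun x : ℝ => x ^ 2) Q) :
    W2sq P Q = (∫ x in Set.Ioo (0:ℝ) 1, (leftInv (mcdf P) x - leftInv (mcdf Q) x) ^ 2) ∧
    (∫ x in Set.Ioo (0:ℝ) 1, (leftInv (mcdf P) x - leftInv (mcdf Q) x) ^ 2) =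
      (∫ x in Set.Ioo (0:ℝ) 1, (rightInv (mcdf P) x - leftInv (mcdf Q) x) ^ 2) ∧
    (∫ x in Set.Ioo (0:ℝ) 1, (leftInv (mcdf P) x - leftInv (mcdf Q) x) ^ 2) =
      (∫ x in Set.Ioo (0:ℝ) 1, (leftInv (mcdf P) x - rightInv (mcdf Q) x) ^ 2) ∧
    (∫ x in Set.Ioo (0:ℝ) 1, (leftInv (mcdf P) x - leftInv (mcdf Q) x) ^ 2) =
      (∫ x in Set.Ioo (0:ℝ) 1, (rightInv (mcdf P) x - rightInv (mcdf Q) x) ^ 2) := by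
  have hP := leftInv_ae_eq_rightInv (cdf P).mono (tendsto_cdf_atBot P) (tendsto_cdf_atTop P)
  have hQ := leftInv_ae_eq_rightInv (cdf Q).mono (tendsto_cdf_atBot Q) (tendsto_cdf_atTop Q)
  rw [mcdf_eq_cdf P, mcdf_eq_cdf Q]
  refine ⟨W2sq_eq_integral_sq_sub_leftInv_cdf hP2 hQ2, ?_, ?_, ?_⟩ <;>
    refine integral_congr_ae ?_ <;>
    filter_upwards [hP, hQ] with u hPu hQu <;> simp only [hPu, hQu]
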